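/- arXiv:2511.00473 — 4 statements merged into one kernel-verified Lean document; each statement's English description precedes it below -/
import Mathlib

section
/- In the formal power series ring Q[[t]], there exists a unique power series s(t) satisfying t·(1 − exp(t))·s(t) = t·exp(t) + 1 − exp(t), and this power series satisfies s(t) + s(−t) = −1. (Informally, s(t) = e^t/(1−e^t) + 1/t, and s(t) + 1/2 is an odd power series.) -/
/-!
The Bernoulli series `B = ∑ B'ₙ tⁿ/n!` satisfies `B·(eᵗ − 1) = t·eᵗ` and has constant term `1`, so
`s = (1 − B)/t` is a solution; it is unique because `t·(1 − eᵗ) ≠ 0` in the domain `ℚ⟦t⟧`.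
Substituting `−t` and multiplying by `eᵗ` (using `eᵗ·e⁻ᵗ = 1`) shows that `s(−t)` solves the
same equation with right-hand side `eᵗ − 1 − t`; adding the two equations gives
`t·(1 − eᵗ)·(s(t) + s(−t)) = −t·(1 − eᵗ)`, and cancelling yields `s(t) + s(−t) = −1`.
-/

open PowerSeries

section

variable {A : Type*} [CommRing A] [Algebra ℚ A]

theorem X_mul_one_sub_exp_ne_zero [Nontrivial A] : (X * (1 - exp A) : A⟦X⟧) ≠ 0 := by
  intro h
  have := congrArg (coeff 2) h
  simp [coeff_exp] at this

theorem exists_X_mul_one_sub_exp_mul_eq :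
    ∃ s : A⟦X⟧, X * (1 - exp A) * s = X * exp A + 1 - exp A := by
  obtain ⟨s, hs⟩ : (X : A⟦X⟧) ∣ 1 - bernoulli'PowerSeries A := by
    rw [X_dvd_iff]
    simp [bernoulli'PowerSeries]
  refine ⟨s, ?_⟩
  calc X * (1 - exp A) * s = (1 - exp A) * (1 - bernoulli'PowerSeries A) := by rw [hs]; ring
    _ = 1 - exp A + bernoulli'PowerSeries A * (exp A - 1) := by ring
    _ = X * exp A + 1 - exp A := by rw [bernoulli'PowerSeries_mul_exp_sub_one]; ring

theorem X_mul_one_sub_exp_mul_rescale_neg_one {s : A⟦X⟧}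
    (hs : X * (1 - exp A) * s = X * exp A + 1 - exp A) :
    X * (1 - exp A) * rescale (-1) s = exp A - 1 - X := by
  have hneg := congrArg (rescale (-1 : A)) hs
  simp only [map_mul, map_add, map_sub, map_one, rescale_neg_one_X] at hneg
  have hinv : exp A * rescale (-1) (exp A) = 1 := exp_mul_exp_neg_eq_one
  linear_combination exp A * hneg - (X * rescale (-1) s + X + 1) * hinv

end

/-- In `ℚ⟦t⟧` there is a unique power series `s` with
`t·(1 − exp t)·s = t·exp t + 1 − exp t` (informally `s(t) = e^t/(1−e^t) + 1/t`),
and any such `s` satisfies `s(t) + s(−t) = −1`. -/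
theorem stmt1 :
    (∃! s : PowerSeries ℚ,
      X * (1 - exp ℚ) * s = X * exp ℚ + 1 - exp ℚ) ∧
    (∀ s : PowerSeries ℚ,
      X * (1 - exp ℚ) * s = X * exp ℚ + 1 - exp ℚ →
      s + rescale (-1 : ℚ) s = -1) := by
  obtain ⟨s, hs⟩ := exists_X_mul_one_sub_exp_mul_eq (A := ℚ)
  refine ⟨⟨s, hs, fun t ht => mul_left_cancel₀ X_mul_one_sub_exp_ne_zero (ht.trans hs.symm)⟩,
    fun s hs => mul_left_cancel₀ X_mul_one_sub_exp_ne_zero ?_⟩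
  linear_combination hs + X_mul_one_sub_exp_mul_rescale_neg_one hs
end

section
/- Let G be a group, K a commutative ring, and I(G) the augmentation ideal of K[G]. Then for every element c of the commutator subgroup [G,G] of G, the element c − 1 lies in I(G)². -/
/-!
For a multiplicative map `φ : G →* R` and a left ideal `J`, the `g` with `φ g - 1 ∈ J` form a
subgroup, so it suffices to treat a single commutator. With `x = φ a⁻¹`, `y = φ b⁻¹`, the unit
`φ (a * b)` inverts `y * x`, whence
`φ ⁅a, b⁆ - 1 = φ (a * b) * (x * y - y * x) = φ (a * b) * ((x - 1) * (y - 1) - (y - 1) * (x - 1))`,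
which lies in `I * I` once every `φ g - 1` lies in `I`.
-/

open scoped commutatorElement

namespace MonoidHom

variable {R G : Type*} [Ring R] [Group G] (φ : G →* R)

def congruenceSubgroup (J : Ideal R) : Subgroup G where
  carrier := {g | φ g - 1 ∈ J}
  one_mem' := by simp
  mul_mem' {x y} hx hy := by
    have h : φ (x * y) - 1 = φ x * (φ y - 1) + (φ x - 1) := by rw [map_mul]; noncomm_ring
    show φ (x * y) - 1 ∈ J
    rw [h]
    exact add_mem (J.mul_mem_left _ hy) hx
  inv_mem' {x} hx := by
    have h : φ x⁻¹ - 1 = -(φ x⁻¹ * (φ x - 1)) := by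
      rw [mul_sub, ← map_mul, inv_mul_cancel, map_one]; noncomm_ring
    show φ x⁻¹ - 1 ∈ J
    rw [h]
    exact neg_mem (J.mul_mem_left _ hx)

variable {φ} {I : Ideal R}

theorem commutatorElement_mem_congruenceSubgroup_mul (hI : ∀ g, φ g - 1 ∈ I) (a b : G) :
    ⁅a, b⁆ ∈ φ.congruenceSubgroup (I * I) := by
  set x := φ a⁻¹
  set y := φ b⁻¹
  have hinv : φ (a * b) * (y * x) = 1 := by
    rw [← map_mul, ← map_mul, mul_assoc, mul_inv_cancel_left, mul_inv_cancel, map_one]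
  have h : φ ⁅a, b⁆ - 1 = φ (a * b) * ((x - 1) * (y - 1) - (y - 1) * (x - 1)) := by
    have hsub : (x - 1) * (y - 1) - (y - 1) * (x - 1) = x * y - y * x := by noncomm_ring
    rw [hsub, mul_sub, hinv, ← map_mul, ← map_mul, commutatorElement_def, mul_assoc]
  show φ ⁅a, b⁆ - 1 ∈ I * I
  rw [h]
  exact Ideal.mul_mem_left _ _ <| sub_mem (Ideal.mul_mem_mul (hI _) (hI _))
    (Ideal.mul_mem_mul (hI _) (hI _))

theorem commutator_le_congruenceSubgroup_mul (hI : ∀ g, φ g - 1 ∈ I) :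
    commutator G ≤ φ.congruenceSubgroup (I * I) := by
  rw [commutator_eq_closure, Subgroup.closure_le]
  rintro _ ⟨a, b, rfl⟩
  exact commutatorElement_mem_congruenceSubgroup_mul hI a b

end MonoidHom

/-- In the group algebra `K[G]` with augmentation ideal `I(G)`, for every element `c`
of the commutator subgroup `[G,G]`, the element `c − 1` lies in `I(G)²`. -/
theorem stmt6 {K G : Type*} [CommRing K] [Group G] (c : G) (hc : c ∈ commutator G) :
    (MonoidAlgebra.of K G c : MonoidAlgebra K G) - 1
      ∈ (RingHom.ker ((MonoidAlgebra.lift K K G) 1 : MonoidAlgebra K G →ₐ[K] K)) ^ 2 := by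
  have hI : ∀ g, MonoidAlgebra.of K G g - 1 ∈
      RingHom.ker ((MonoidAlgebra.lift K K G) 1 : MonoidAlgebra K G →ₐ[K] K) := fun g => by
    simp [RingHom.mem_ker]
  rw [Submodule.pow_succ, Submodule.pow_one]
  exact MonoidHom.commutator_le_congruenceSubgroup_mul hI hc
end

section
/- Let G be a group with subgroups H and K, and let L ≤ K be a subgroup such that for all h ∈ H and k ∈ K, the element (h⁻¹kh)·k⁻¹ lies in L. Then in the group algebra K[G] (over a commutative ring), the product I(K)·I(H) is contained in the sum of K-submodules I(H)·I(K) + I(K)·I(L) + I(L), where for a subgroup S ≤ G, I(S) denotes the K-span of {s − 1 : s ∈ S}. -/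
/-- For a subgroup `S ≤ G`, the `R`-submodule of `R[G]` spanned by the elements
`s − 1` for `s ∈ S`. -/
noncomputable def augSubmodule (R : Type*) {G : Type*} [CommRing R] [Group G] (S : Subgroup G) :
    Submodule R (MonoidAlgebra R G) :=
  Submodule.span R ((fun s : G => (MonoidAlgebra.of R G s : MonoidAlgebra R G) - 1) '' (S : Set G))

/-- The key identity in `R[G]`, applied to `k' = h⁻¹kh = kl` with `l = k⁻¹h⁻¹kh ∈ L`. -/
theorem sub_one_mul_sub_one_eq_of_mul_eq {A : Type*} [Ring A] {h k k' l : A}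
    (hconj : h * k' = k * h) (hl : k * l = k') :
    (k - 1) * (h - 1) = (h - 1) * (k' - 1) + (k - 1) * (l - 1) + (l - 1) := by
  simp only [mul_sub, sub_mul, mul_one, one_mul, hconj, hl]
  abel

section

variable {R G : Type*} [CommRing R] [Group G]

theorem of_sub_one_mem_augSubmodule {S : Subgroup G} {s : G} (hs : s ∈ S) :
    MonoidAlgebra.of R G s - 1 ∈ augSubmodule R S :=
  Submodule.subset_span ⟨s, hs, rfl⟩

theorem augSubmodule_mul_le_iff {S T : Subgroup G} {P : Submodule R (MonoidAlgebra R G)} :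
    augSubmodule R S * augSubmodule R T ≤ P ↔
      ∀ s ∈ S, ∀ t ∈ T, (MonoidAlgebra.of R G s - 1) * (MonoidAlgebra.of R G t - 1) ∈ P := by
  refine ⟨fun hP s hs t ht => hP (Submodule.mul_mem_mul
    (of_sub_one_mem_augSubmodule hs) (of_sub_one_mem_augSubmodule ht)), fun hP => ?_⟩
  rw [augSubmodule, augSubmodule, Submodule.span_mul_span, Submodule.span_le]
  rintro _ ⟨_, ⟨s, hs, rfl⟩, _, ⟨t, ht, rfl⟩, rfl⟩
  exact hP s hs t ht

end

/-- If `H, K, L` are subgroups of `G` with `L ≤ K` and `(h⁻¹kh)·k⁻¹ ∈ L` for all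
`h ∈ H`, `k ∈ K`, then in the group algebra `R[G]` one has
`I(K)·I(H) ⊆ I(H)·I(K) + I(K)·I(L) + I(L)`. -/
theorem stmt12 {R G : Type*} [CommRing R] [Group G] (H Kk L : Subgroup G)
    (hLK : L ≤ Kk)
    (hcomm : ∀ h ∈ H, ∀ k ∈ Kk, (h⁻¹ * k * h) * k⁻¹ ∈ L) :
    augSubmodule R Kk * augSubmodule R H ≤
      augSubmodule R H * augSubmodule R Kk + augSubmodule R Kk * augSubmodule R L
        + augSubmodule R L := by
  refine augSubmodule_mul_le_iff.2 fun k hk h hh => ?_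
  have hl : k⁻¹ * h⁻¹ * k * h ∈ L := by
    simpa [mul_assoc] using inv_mem (hcomm h hh k⁻¹ (inv_mem hk))
  have hk' : h⁻¹ * k * h ∈ Kk := by
    simpa [mul_assoc] using mul_mem hk (hLK hl)
  rw [sub_one_mul_sub_one_eq_of_mul_eq (k' := MonoidAlgebra.of R G (h⁻¹ * k * h))
    (l := MonoidAlgebra.of R G (k⁻¹ * h⁻¹ * k * h))
    (by rw [← map_mul, ← map_mul]; group) (by rw [← map_mul]; group)]
  exact add_mem (add_mem
    (Submodule.mem_sup_left (Submodule.mem_sup_left (Submodule.mul_mem_mul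
      (of_sub_one_mem_augSubmodule hh) (of_sub_one_mem_augSubmodule hk'))))
    (Submodule.mem_sup_left (Submodule.mem_sup_right (Submodule.mul_mem_mul
      (of_sub_one_mem_augSubmodule hk) (of_sub_one_mem_augSubmodule hl)))))
    (Submodule.mem_sup_right (of_sub_one_mem_augSubmodule hl))
end

section
/- Let F be the free group on a set S, K a commutative ring, and fix a function v: S → K[F]. Then there exists a unique K-linear map d: K[F] → K[F] satisfying d(xy) = d(x)·ε(y) + x·d(y) for all x, y ∈ K[F], and d(s) = v(s) for all s ∈ S, where ε: K[F] → K is the augmentation. Moreover d(1) = 0 and d(s⁻¹) = −s⁻¹·v(s)·ε(s⁻¹) = −s⁻¹·v(s) for s ∈ S. -/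
/-!
A Fox derivation `d` of `K[G]` is the same thing as a `K`-linear map whose restriction
`g ↦ d g` to the group is a 1-cocycle for the left multiplication action of `G` on `K[G]`;
indeed, the Leibniz rule on group elements is exactly the cocycle identity, and both sides of
the rule are bilinear. On a free group, 1-cocycles `φ` correspond to sections
`g ↦ (φ g, g)` of the semidirect product `K[G] ⋊ G → G`, so the universal property of the
free group gives a unique cocycle with prescribed values on the generators. Its linear
extension is the required Fox derivative, and `d 1 = 0`, `d s⁻¹ = -s⁻¹ d s` are the
usual identities for cocycles.
-/

noncomputable section

abbrev DistribMulAction.toMulAutMultiplicative (G M : Type*) [Group G] [AddGroup M]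
    [DistribMulAction G M] : G →* MulAut (Multiplicative M) :=
  (MulAutMultiplicative M).symm.toMonoidHom.comp (DistribMulAction.toAddAut G M)

namespace groupCohomology

variable {G M : Type*} [Group G] [AddCommGroup M] [DistribMulAction G M]

open DistribMulAction SemidirectProduct

def IsCocycle₁.toSemidirectProduct {φ : G → M} (hφ : IsCocycle₁ φ) :
    G →* Multiplicative M ⋊[toMulAutMultiplicative G M] G where
  toFun g := ⟨.ofAdd (φ g), g⟩
  map_one' := SemidirectProduct.ext (by simp [map_one_of_isCocycle₁ hφ]) rfl
  map_mul' g h := SemidirectProduct.ext (by simp [hφ g h, add_comm]) rfl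

theorem isCocycle₁_left_of_rightHom_comp_eq_id
    (σ : G →* Multiplicative M ⋊[toMulAutMultiplicative G M] G)
    (hσ : rightHom.comp σ = MonoidHom.id G) :
    IsCocycle₁ fun g => (σ g).left.toAdd := by
  have hright (g : G) : (σ g).right = g := DFunLike.congr_fun hσ g
  intro g h
  change (σ (g * h)).left.toAdd = _
  rw [map_mul, mul_left, toAdd_mul, hright, add_comm]
  rfl

end groupCohomology

namespace FreeGroup

variable {S M : Type*} [AddCommGroup M] [DistribMulAction (FreeGroup S) M]

open DistribMulAction SemidirectProduct groupCohomology

theorem existsUnique_isCocycle₁ (v : S → M) :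
    ∃! φ : FreeGroup S → M, IsCocycle₁ φ ∧ ∀ s, φ (of s) = v s := by
  let σ : FreeGroup S →* Multiplicative M ⋊[toMulAutMultiplicative _ M] FreeGroup S :=
    lift fun s => ⟨.ofAdd (v s), of s⟩
  have hσ : rightHom.comp σ = MonoidHom.id _ := ext_hom _ _ fun s => by simp [σ]
  refine ⟨fun g => (σ g).left.toAdd,
    ⟨isCocycle₁_left_of_rightHom_comp_eq_id σ hσ, fun s => by simp [σ]⟩, ?_⟩
  rintro φ ⟨hφ, hφv⟩
  have h : hφ.toSemidirectProduct = σ :=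
    ext_hom _ _ fun s => by simp [σ, IsCocycle₁.toSemidirectProduct, hφv]
  funext g
  simp [← h, IsCocycle₁.toSemidirectProduct]

end FreeGroup

namespace MonoidAlgebra

open groupCohomology

variable {k : Type*} [CommRing k]

abbrev leftMulDistribMulAction (G : Type*) [Monoid G] : DistribMulAction G (MonoidAlgebra k G) :=
  DistribMulAction.compHom _ (of k G)

attribute [local instance] leftMulDistribMulAction

def IsFoxDerivation {G : Type*} [Monoid G] (d : MonoidAlgebra k G →ₗ[k] MonoidAlgebra k G) :
    Prop :=
  ∀ x y, d (x * y) = lift k k G 1 y • d x + x * d y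

section Monoid

variable {G : Type*} [Monoid G] {d : MonoidAlgebra k G →ₗ[k] MonoidAlgebra k G}

theorem isFoxDerivation_iff_isCocycle₁ :
    IsFoxDerivation d ↔ IsCocycle₁ fun g => d (of k G g) := by
  refine ⟨fun hd g h => ?_, fun hφ x y => ?_⟩
  · change d (of k G (g * h)) = of k G g * d (of k G h) + d (of k G g)
    rw [map_mul, hd, lift_of, MonoidHom.one_apply, one_smul, add_comm]
  induction x using MonoidAlgebra.induction_on with
  | of g =>
    induction y using MonoidAlgebra.induction_on with
    | of h =>
      rw [← map_mul, lift_of, MonoidHom.one_apply, one_smul, add_comm]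
      exact hφ g h
    | add y₁ y₂ h₁ h₂ =>
      simp only [mul_add, map_add, h₁, h₂, add_smul]
      abel
    | smul r y hy =>
      simp only [map_smul, hy, smul_add, smul_smul, smul_eq_mul, mul_smul_comm]
  | add x₁ x₂ h₁ h₂ =>
    simp only [add_mul, map_add, h₁, h₂, smul_add]
    abel
  | smul r x hx =>
    simp only [smul_mul_assoc, map_smul, hx, smul_add, smul_comm r]

theorem IsFoxDerivation.map_one (hd : IsFoxDerivation d) : d 1 = 0 :=
  map_one_of_isCocycle₁ (f := fun g => d (of k G g)) (isFoxDerivation_iff_isCocycle₁.1 hd)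

theorem isFoxDerivation_constr {φ : G → MonoidAlgebra k G} (hφ : IsCocycle₁ φ) :
    IsFoxDerivation ((basis G k).constr k φ) := by
  rw [isFoxDerivation_iff_isCocycle₁]
  simpa [← basis_apply] using hφ

end Monoid

section Group

variable {G : Type*} [Group G] {d : MonoidAlgebra k G →ₗ[k] MonoidAlgebra k G}

theorem IsFoxDerivation.map_of_inv (hd : IsFoxDerivation d) (g : G) :
    d (of k G g⁻¹) = -(of k G g⁻¹ * d (of k G g)) := by
  have h := map_inv_of_isCocycle₁ (isFoxDerivation_iff_isCocycle₁.1 hd) g⁻¹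
  rw [inv_inv] at h
  exact neg_eq_iff_eq_neg.1 h.symm

end Group

theorem existsUnique_isFoxDerivation_freeGroup {S : Type*}
    (v : S → MonoidAlgebra k (FreeGroup S)) :
    ∃! d : MonoidAlgebra k (FreeGroup S) →ₗ[k] MonoidAlgebra k (FreeGroup S),
      IsFoxDerivation d ∧ ∀ s, d (of k _ (FreeGroup.of s)) = v s := by
  obtain ⟨φ, ⟨hφ, hφv⟩, hφ_unique⟩ := FreeGroup.existsUnique_isCocycle₁ v
  refine ⟨(basis _ k).constr k φ, ⟨isFoxDerivation_constr hφ, fun s => ?_⟩, ?_⟩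
  · simpa [← basis_apply] using hφv s
  rintro d ⟨hd, hdv⟩
  have hdφ : (fun g => d (of k _ g)) = φ :=
    hφ_unique _ ⟨isFoxDerivation_iff_isCocycle₁.1 hd, hdv⟩
  refine (basis _ k).ext fun g => ?_
  rw [Module.Basis.constr_basis, ← hdφ]
  rfl

end MonoidAlgebra

end

/-- Fox derivatives on the group algebra of a free group: given values `v s` on the
free generators, there is a unique `K`-linear map `d : K[F(S)] → K[F(S)]` with
`d(xy) = ε(y) • d(x) + x·d(y)` and `d(of s) = v s`, where `ε` is the augmentation;
moreover any such `d` satisfies `d(1) = 0` and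
`d(s⁻¹) = −s⁻¹·(v s)·ε(s⁻¹) = −s⁻¹·(v s)`. -/
theorem stmt15 {K S : Type*} [CommRing K] (v : S → MonoidAlgebra K (FreeGroup S)) :
    letI ε : MonoidAlgebra K (FreeGroup S) →ₐ[K] K := (MonoidAlgebra.lift K K (FreeGroup S)) 1
    (∃! d : MonoidAlgebra K (FreeGroup S) →ₗ[K] MonoidAlgebra K (FreeGroup S),
      (∀ x y : MonoidAlgebra K (FreeGroup S), d (x * y) = ε y • d x + x * d y) ∧
      (∀ s : S, d (MonoidAlgebra.of K (FreeGroup S) (FreeGroup.of s)) = v s)) ∧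
    (∀ d : MonoidAlgebra K (FreeGroup S) →ₗ[K] MonoidAlgebra K (FreeGroup S),
      (∀ x y : MonoidAlgebra K (FreeGroup S), d (x * y) = ε y • d x + x * d y) →
      (∀ s : S, d (MonoidAlgebra.of K (FreeGroup S) (FreeGroup.of s)) = v s) →
      d 1 = 0 ∧
      ∀ s : S, d (MonoidAlgebra.of K (FreeGroup S) (FreeGroup.of s)⁻¹)
        = ε (MonoidAlgebra.of K (FreeGroup S) (FreeGroup.of s)⁻¹) •
            (-(MonoidAlgebra.of K (FreeGroup S) (FreeGroup.of s)⁻¹ * v s)) ∧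
          d (MonoidAlgebra.of K (FreeGroup S) (FreeGroup.of s)⁻¹)
        = -(MonoidAlgebra.of K (FreeGroup S) (FreeGroup.of s)⁻¹ * v s)) := by
  refine ⟨MonoidAlgebra.existsUnique_isFoxDerivation_freeGroup v,
    fun d hd hdv => ⟨MonoidAlgebra.IsFoxDerivation.map_one hd, fun s => ?_⟩⟩
  have hinv : d (MonoidAlgebra.of K _ (FreeGroup.of s)⁻¹)
      = -(MonoidAlgebra.of K _ (FreeGroup.of s)⁻¹ * v s) := by
    rw [MonoidAlgebra.IsFoxDerivation.map_of_inv hd, hdv]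
  refine ⟨?_, hinv⟩
  rw [hinv, MonoidAlgebra.lift_of, MonoidHom.one_apply, one_smul]
end
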